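/- If the representation U is irreducible, in the sense that every operator C with C ∘ U g = U g ∘ C for all g ∈ G is a scalar multiple of the identity, then every extreme point A of 𝒞 has exactly one nonzero component: there exists i₀ ∈ I with rank(A i₀) = 1 and A i = 0 for all i ≠ i₀. -/

import Mathlib

open ContinuousLinearMap

/-- The linear map `L(A) = (1/|G|) · Σ_{i ∈ I} Σ_{g ∈ G} (U g) ∘ (A i) ∘ (U g)†`
associated to a family of operators `A : I → (H →L[ℂ] H)`. -/
noncomputable def Lmap {H : Type*} [NormedAddCommGroup H] [InnerProductSpace ℂ H]
    [FiniteDimensional ℂ H] {G : Type*} [Group G] [Fintype G] {I : Type*} [Fintype I]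
    (U : G → (H →L[ℂ] H)) (A : I → (H →L[ℂ] H)) : H →L[ℂ] H :=
  (Fintype.card G : ℂ)⁻¹ •
    ∑ i : I, ∑ g : G, U g ∘L A i ∘L ContinuousLinearMap.adjoint (U g)

/-- The convex set `𝒞` of block operators corresponding to covariant POVMs with
outcome space `I × G`: families `A` with every `A i` positive semidefinite and `L(A) = 1`. -/
def covSet {H : Type*} [NormedAddCommGroup H] [InnerProductSpace ℂ H]
    [FiniteDimensional ℂ H] {G : Type*} [Group G] [Fintype G] {I : Type*} [Fintype I]
    (U : G → (H →L[ℂ] H)) : Set (I → (H →L[ℂ] H)) :=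
  {A | (∀ i, (A i).IsPositive) ∧ Lmap U A = 1}

/-! Irreducibility forces `L(B) = (Σ_i tr B_i / dim H) • 1`, so `𝒞` is the slice `tr = dim H` of
the cone of positive families. An extreme point `A` of such a slice spans an extreme ray of the
cone: every positive family `B` with `A - B` positive is a real multiple of `A`. Testing this on
families supported at a single index `i₀` shows that all other components vanish and that `A i₀`
spans an extreme ray of the cone of positive operators; writing `A i₀` as a sum of positive
rank-one operators then shows that it has rank one. -/

open scoped ComplexOrder
open InnerProductSpace

theorem exists_eq_smul_of_mem_extremePoints {E : Type*} [AddCommGroup E] [Module ℝ E]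
    {K : Set E} {f : E →ₗ[ℝ] ℝ} {c : ℝ} (hK : ∀ y ∈ K, ∀ t : ℝ, 0 < t → t • y ∈ K)
    (hf : ∀ y ∈ K, y ≠ 0 → 0 < f y) {x y z : E}
    (hx : x ∈ (K ∩ f ⁻¹' {c}).extremePoints ℝ) (hy : y ∈ K) (hz : z ∈ K) (hxyz : x = y + z) :
    ∃ t : ℝ, y = t • x := by
  rcases eq_or_ne y 0 with rfl | hy0
  · exact ⟨0, (zero_smul ℝ x).symm⟩
  rcases eq_or_ne z 0 with rfl | hz0
  · exact ⟨1, by rw [hxyz, add_zero, one_smul]⟩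
  have hfy := hf y hy hy0
  have hfz := hf z hz hz0
  have hc : f y + f z = c := by rw [← map_add, ← hxyz]; exact hx.1.2
  have hc0 : 0 < c := hc ▸ add_pos hfy hfz
  have hmem : ∀ w ∈ K, 0 < f w → (c / f w) • w ∈ K ∩ f ⁻¹' {c} := fun w hw hfw =>
    ⟨hK w hw _ (div_pos hc0 hfw), by simp [hfw.ne']⟩
  have hinv : ∀ w, 0 < f w → (f w / c) • (c / f w) • w = w := fun w hfw => by
    rw [smul_smul, div_mul_div_cancel₀ hc0.ne', div_self hfw.ne', one_smul]
  have hseg : x ∈ openSegment ℝ ((c / f y) • y) ((c / f z) • z) :=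
    ⟨f y / c, f z / c, div_pos hfy hc0, div_pos hfz hc0, by rw [← add_div, hc, div_self hc0.ne'],
      by rw [hinv y hfy, hinv z hfz, hxyz]⟩
  refine ⟨f y / c, ?_⟩
  rw [← (mem_extremePoints.1 hx).2 _ (hmem y hy hfy) _ (hmem z hz hfz) hseg |>.1, hinv y hfy]

theorem ContinuousLinearMap.IsPositive.real_smul {E : Type*} [NormedAddCommGroup E]
    [InnerProductSpace ℂ E] {T : E →L[ℂ] E} (hT : T.IsPositive) {t : ℝ} (ht : 0 ≤ t) :
    (t • T).IsPositive := by
  rw [← Complex.coe_smul]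
  exact hT.smul_of_nonneg (Complex.zero_le_real.2 ht)

section PositiveOperators

variable {𝕜 E : Type*} [RCLike 𝕜] [NormedAddCommGroup E] [InnerProductSpace 𝕜 E]

theorem InnerProductSpace.range_rankOne_self {u : E} (hu : u ≠ 0) :
    LinearMap.range (rankOne 𝕜 u u : E →ₗ[𝕜] E) = 𝕜 ∙ u := by
  refine range_smulRight_apply (fun h => hu ?_) u
  simpa using congrArg (· u) h

variable [FiniteDimensional 𝕜 E]

theorem LinearMap.IsPositive.trace_eq_zero_iff {T : E →ₗ[𝕜] E} (hT : T.IsPositive) :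
    LinearMap.trace 𝕜 E T = 0 ↔ T = 0 := by
  classical
  let b := (stdOrthonormalBasis 𝕜 E).toBasis
  rw [LinearMap.trace_eq_matrix_trace 𝕜 b,
    ((LinearMap.posSemidef_toMatrix_iff (stdOrthonormalBasis 𝕜 E)).2 hT).trace_eq_zero_iff,
    LinearEquiv.map_eq_zero_iff]

theorem ContinuousLinearMap.IsPositive.re_trace_pos {T : E →L[𝕜] E} (hT : T.IsPositive)
    (hT0 : T ≠ 0) : 0 < RCLike.re (LinearMap.trace 𝕜 E T) := by
  have hne : LinearMap.trace 𝕜 E T ≠ 0 := by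
    rwa [Ne, hT.toLinearMap.trace_eq_zero_iff, ← ContinuousLinearMap.toLinearMap_zero, coe_inj]
  exact (RCLike.pos_iff.1 (lt_of_le_of_ne hT.toLinearMap.trace_nonneg hne.symm)).1

theorem ContinuousLinearMap.IsPositive.finrank_range_eq_one_of_forall_le_eq_smul
    {T : E →L[𝕜] E} (hT : T.IsPositive) (hT0 : T ≠ 0)
    (hray : ∀ S : E →L[𝕜] E, S.IsPositive → (T - S).IsPositive → ∃ t : 𝕜, S = t • T) :
    Module.finrank 𝕜 (LinearMap.range (T : E →ₗ[𝕜] E)) = 1 := by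
  classical
  obtain ⟨m, u, hTu⟩ := isPositive_iff_eq_sum_rankOne.1 hT
  obtain ⟨k, hk⟩ : ∃ k, u k ≠ 0 := by
    by_contra! h
    simp [hTu, h] at hT0
  have hle : (T - rankOne 𝕜 (u k) (u k)).IsPositive := by
    rw [hTu, ← Finset.add_sum_erase _ _ (Finset.mem_univ k), add_sub_cancel_left]
    exact isPositive_sum _ fun j _ => isPositive_rankOne_self (u j)
  obtain ⟨t, ht⟩ := hray _ (isPositive_rankOne_self (u k)) hle
  have ht0 : t ≠ 0 := by
    rintro rfl
    exact rankOne_ne_zero (𝕜 := 𝕜) hk hk (by simpa using ht)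
  rw [← LinearMap.range_smul _ t ht0, ← toLinearMap_smul, ← ht, range_rankOne_self hk,
    finrank_span_singleton hk]

end PositiveOperators

section Covariant

variable {H : Type*} [NormedAddCommGroup H] [InnerProductSpace ℂ H] [FiniteDimensional ℂ H]
  {G : Type*} [Group G] {I : Type*} [Fintype I] {U : G → (H →L[ℂ] H)}

theorem conj_comp_eq_comp_conj_mul (hU2 : ∀ g, adjoint (U g) ∘L U g = 1)
    (hUm : ∀ g h, U (g * h) = U g ∘L U h) (B : H →L[ℂ] H) (g h : G) :
    U h ∘L (U g ∘L B ∘L adjoint (U g)) = (U (h * g) ∘L B ∘L adjoint (U (h * g))) ∘L U h := by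
  have hadj : adjoint (U (h * g)) ∘L U h = adjoint (U g) := by
    rw [hUm, adjoint_comp, comp_assoc, hU2, one_def, comp_id]
  rw [comp_assoc, comp_assoc, hadj, hUm, comp_assoc]

variable [Fintype G]

theorem Lmap_comp_comm (hU2 : ∀ g, adjoint (U g) ∘L U g = 1)
    (hUm : ∀ g h, U (g * h) = U g ∘L U h) (B : I → (H →L[ℂ] H)) (h : G) :
    Lmap U B ∘L U h = U h ∘L Lmap U B := by
  simp only [Lmap, smul_comp, comp_smul, finsetSum_comp, comp_finsetSum]
  congr 1
  refine Finset.sum_congr rfl fun i _ => ?_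
  exact (Fintype.sum_equiv (Equiv.mulLeft h) _ _ fun g =>
    conj_comp_eq_comp_conj_mul hU2 hUm (B i) g h).symm

theorem trace_Lmap (hU2 : ∀ g, adjoint (U g) ∘L U g = 1) (B : I → (H →L[ℂ] H)) :
    LinearMap.trace ℂ H (Lmap U B) = ∑ i, LinearMap.trace ℂ H (B i) := by
  have hconj : ∀ i g, LinearMap.trace ℂ H (U g ∘L B i ∘L adjoint (U g)) =
      LinearMap.trace ℂ H (B i) := fun i g => by
    rw [toLinearMap_comp, LinearMap.trace_comp_comm', ← toLinearMap_comp, comp_assoc, hU2,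
      one_def, comp_id]
  simp only [Lmap, toLinearMap_smul, map_smul, toLinearMap_sum, map_sum, hconj, Finset.sum_const,
    Finset.card_univ, nsmul_eq_mul, smul_eq_mul, Finset.mul_sum]
  refine Finset.sum_congr rfl fun i _ => ?_
  rw [← mul_assoc, inv_mul_cancel₀ (by exact_mod_cast Fintype.card_ne_zero), one_mul]

theorem Lmap_eq_smul_one [Nontrivial H] (hU2 : ∀ g, adjoint (U g) ∘L U g = 1)
    (hUm : ∀ g h, U (g * h) = U g ∘L U h)
    (hirr : ∀ C : H →L[ℂ] H, (∀ g, C ∘L U g = U g ∘L C) → ∃ c : ℂ, C = c • 1)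
    (B : I → (H →L[ℂ] H)) :
    Lmap U B = ((∑ i, LinearMap.trace ℂ H (B i)) / Module.finrank ℂ H) • 1 := by
  obtain ⟨c, hc⟩ := hirr _ (Lmap_comp_comm hU2 hUm B)
  have htrace := trace_Lmap hU2 B
  rw [hc, toLinearMap_smul, map_smul, toLinearMap_one, LinearMap.trace_one, smul_eq_mul] at htrace
  rw [hc, ← htrace, mul_div_cancel_right₀ _ (by exact_mod_cast Module.finrank_pos.ne')]

variable (H I) in
noncomputable def reTraceSum : (I → (H →L[ℂ] H)) →ₗ[ℝ] ℝ where
  toFun B := (∑ i, LinearMap.trace ℂ H (B i)).re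
  map_add' B C := by simp [Finset.sum_add_distrib]
  map_smul' r B := by
    simp only [Pi.smul_apply, ← Complex.coe_smul, toLinearMap_smul, map_smul, smul_eq_mul,
      ← Finset.mul_sum, Complex.re_ofReal_mul, RingHom.id_apply]

theorem reTraceSum_pos {B : I → (H →L[ℂ] H)} (hB : ∀ i, (B i).IsPositive) (hB0 : B ≠ 0) :
    0 < reTraceSum H I B := by
  obtain ⟨i, hi⟩ := Function.ne_iff.1 hB0
  simp only [reTraceSum, LinearMap.coe_mk, AddHom.coe_mk, Complex.re_sum]
  exact Finset.sum_pos' (fun j _ => (hB j).toLinearMap.trace_nonneg.1)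
    ⟨i, Finset.mem_univ i, (hB i).re_trace_pos hi⟩

theorem covSet_eq_inter_preimage [Nontrivial H] (hU2 : ∀ g, adjoint (U g) ∘L U g = 1)
    (hUm : ∀ g h, U (g * h) = U g ∘L U h)
    (hirr : ∀ C : H →L[ℂ] H, (∀ g, C ∘L U g = U g ∘L C) → ∃ c : ℂ, C = c • 1) :
    covSet U = {B : I → (H →L[ℂ] H) | ∀ i, (B i).IsPositive} ∩
      reTraceSum H I ⁻¹' {(Module.finrank ℂ H : ℝ)} := by
  ext B
  refine and_congr_right fun hB => ?_
  have hreal : 0 ≤ ∑ i, LinearMap.trace ℂ H (B i) :=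
    Finset.sum_nonneg fun i _ => (hB i).toLinearMap.trace_nonneg
  have hn : (Module.finrank ℂ H : ℂ) ≠ 0 := by exact_mod_cast Module.finrank_pos.ne'
  rw [Lmap_eq_smul_one hU2 hUm hirr, ← Algebra.algebraMap_eq_smul_one,
    FaithfulSMul.algebraMap_eq_one_iff, div_eq_one_iff_eq hn, Complex.ext_iff]
  simp [reTraceSum, ← Complex.nonneg_iff.1 hreal |>.2]

end Covariant

section ExtremeRay

variable {H : Type*} [NormedAddCommGroup H] [InnerProductSpace ℂ H]
  {I : Type*} {A : I → (H →L[ℂ] H)} (hA : ∀ i, (A i).IsPositive)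
  (hray : ∀ B : I → (H →L[ℂ] H), (∀ i, (B i).IsPositive) → (∀ i, (A i - B i).IsPositive) →
    ∃ t : ℝ, B = t • A)
include hA hray

theorem exists_pi_single_eq_smul [DecidableEq I] {i₀ : I} {S : H →L[ℂ] H} (hS : S.IsPositive)
    (hAS : (A i₀ - S).IsPositive) : ∃ t : ℝ, Pi.single i₀ S = t • A := by
  refine hray _ (fun i => ?_) fun i => ?_
  · rcases eq_or_ne i i₀ with rfl | hi
    · simpa using hS
    · simp [hi, isPositive_zero]
  · rcases eq_or_ne i i₀ with rfl | hi
    · simpa using hAS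
    · simpa [hi] using hA i

theorem eq_zero_of_ne_of_ne_zero {i₀ j : I} (hi₀ : A i₀ ≠ 0) (hj : j ≠ i₀) : A j = 0 := by
  classical
  obtain ⟨t, ht⟩ := exists_pi_single_eq_smul hA hray (i₀ := i₀) (hA i₀) (by simp [isPositive_zero])
  have ht1 : t = 1 := smul_left_injective ℝ hi₀ <| by simpa using (congrFun ht i₀).symm
  simpa [hj, ht1] using (congrFun ht j).symm

theorem finrank_range_eq_one_of_ne_zero [FiniteDimensional ℂ H] {i₀ : I} (hi₀ : A i₀ ≠ 0) :
    Module.finrank ℂ (LinearMap.range (A i₀ : H →ₗ[ℂ] H)) = 1 := by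
  classical
  refine (hA i₀).finrank_range_eq_one_of_forall_le_eq_smul hi₀ fun S hS hAS => ?_
  obtain ⟨t, ht⟩ := exists_pi_single_eq_smul hA hray hS hAS
  refine ⟨t, ?_⟩
  rw [Complex.coe_smul]
  simpa using congrFun ht i₀

end ExtremeRay

theorem extremePoint_of_irreducible_single_orbit
    {H : Type*} [NormedAddCommGroup H] [InnerProductSpace ℂ H] [FiniteDimensional ℂ H]
    [Nontrivial H]
    {G : Type*} [Group G] [Fintype G] {I : Type*} [Fintype I]
    (U : G → (H →L[ℂ] H))
    (hU2 : ∀ g, ContinuousLinearMap.adjoint (U g) ∘L U g = 1)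
    (hUm : ∀ g h, U (g * h) = U g ∘L U h)
    (hirr : ∀ C : H →L[ℂ] H, (∀ g, C ∘L U g = U g ∘L C) → ∃ c : ℂ, C = c • 1)
    (A : I → (H →L[ℂ] H))
    (hext : A ∈ Set.extremePoints ℝ (covSet U)) :
    ∃ i₀ : I, Module.finrank ℂ (LinearMap.range (A i₀ : H →ₗ[ℂ] H)) = 1 ∧
      ∀ i ≠ i₀, A i = 0 := by
  rw [covSet_eq_inter_preimage hU2 hUm hirr] at hext
  obtain ⟨hA, hAtrace⟩ := hext.1
  have hray : ∀ B : I → (H →L[ℂ] H), (∀ i, (B i).IsPositive) → (∀ i, (A i - B i).IsPositive) →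
      ∃ t : ℝ, B = t • A := fun B hB hAB =>
    exists_eq_smul_of_mem_extremePoints (fun _ hC _ ht i => (hC i).real_smul ht.le)
      (fun _ hC hC0 => reTraceSum_pos hC hC0) hext hB hAB (add_sub_cancel B A).symm
  obtain ⟨i₀, hi₀⟩ : ∃ i₀, A i₀ ≠ 0 := by
    by_contra! h
    simp only [show A = 0 from funext h, Set.mem_preimage, map_zero, Set.mem_singleton_iff]
      at hAtrace
    exact Module.finrank_pos.ne' (by exact_mod_cast hAtrace.symm)
  exact ⟨i₀, finrank_range_eq_one_of_ne_zero hA hray hi₀,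
    fun j hj => eq_zero_of_ne_of_ne_zero hA hray hi₀ hj⟩
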